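/- arXiv:1612.03460 — 3 statements merged into one kernel-verified Lean document; each statement's English description precedes it below -/
import Mathlib

section
/- Let D_0 be the operator on ℓ²(ℤ_{≥0}) defined by (D_0 φ)(l) = p^{l/e}(φ(l) - φ(l+1)). Then D_0 is injective, its inverse on its range is given by (D_0^{-1} k)(l) = ∑_{j ≥ l} p^{-j/e} k(j), and D_0^{-1} extends to a Hilbert–Schmidt (hence compact) operator on ℓ²(ℤ_{≥0}) with Hilbert–Schmidt norm 1/(1 - p^{-2/e}). -/
/-!
With `ρ = p^(-1/e) < 1`, the equation `D₀ φ = k` says `ρ^j k j = φ j - φ (j+1)`, so summing over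
`j ≥ l` telescopes to `φ l`, because `φ ∈ ℓ²` tends to `0`; injectivity is the case `k = 0`.
The kernel `K l j = ρ^j 1_{l ≤ j}` has `j`-th column of norm at most `(j+1) ρ^j`, so
`k ↦ ∑ⱼ k j • (column j)` is a norm-convergent series of rank-one operators, hence compact.
Its Hilbert–Schmidt norm is
`(∑_l ∑_{j ≥ l} ρ^{2j})^{1/2} = (∑_l ρ^{2l} / (1 - ρ²))^{1/2} = 1/(1 - ρ²)`.
-/

open Filter Finset
open scoped ENNReal Topology

theorem Memℓp.tendsto_cofinite_zero {α E : Type*} [NormedAddCommGroup E] {p : ℝ≥0∞}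
    {f : α → E} (hf : Memℓp f p) (hp : 0 < p.toReal) : Tendsto f cofinite (𝓝 0) := by
  have hpow : Tendsto (fun i => ‖f i‖ ^ p.toReal) cofinite (𝓝 0) :=
    ((memℓp_gen_iff hp).1 hf).tendsto_cofinite_zero
  have hroot := hpow.rpow_const (p := p.toReal⁻¹) (Or.inr (inv_nonneg.2 hp.le))
  rw [Real.zero_rpow (inv_ne_zero hp.ne')] at hroot
  exact tendsto_zero_iff_norm_tendsto_zero.2
    (hroot.congr fun i => Real.rpow_rpow_inv (norm_nonneg _) hp.ne')

theorem HasSum.eq_of_telescoping {G : Type*} [AddCommGroup G] [TopologicalSpace G]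
    [IsTopologicalAddGroup G] [T2Space G] {f : ℕ → G} {l : ℕ} {s : G}
    (h : HasSum (fun j => if l ≤ j then f j - f (j + 1) else 0) s)
    (hf : Tendsto f atTop (𝓝 0)) : s = f l := by
  have hshift := (hasSum_nat_add_iff' l).2 h
  simp only [le_add_iff_nonneg_left, zero_le, if_true, add_right_comm _ l 1] at hshift
  rw [Finset.sum_eq_zero fun j hj => if_neg (by simpa using hj), sub_zero] at hshift
  have hpartialSum (N : ℕ) : ∑ i ∈ range N, (f (i + l) - f (i + 1 + l)) = f l - f (N + l) := by
    simpa using Finset.sum_range_sub' (fun n => f (n + l)) N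
  have hpartial := hshift.tendsto_sum_nat
  simp only [hpartialSum] at hpartial
  have hlim : Tendsto (fun N => f l - f (N + l)) atTop (𝓝 (f l)) := by
    simpa using tendsto_const_nhds.sub (hf.comp (tendsto_add_atTop_nat l))
  exact tendsto_nhds_unique hpartial hlim

section SynthesisOperator

variable {𝕜 F : Type*} [RCLike 𝕜] [NormedAddCommGroup F] [NormedSpace 𝕜 F]
  {p : ℝ≥0∞} [Fact (1 ≤ p)]

variable (𝕜 p) in
noncomputable def synthesisOperator (v : ℕ → F) : lp (fun _ : ℕ => 𝕜) p →L[𝕜] F :=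
  ∑' j, (lp.evalCLM 𝕜 (fun _ : ℕ => 𝕜) p j).smulRight (v j)

theorem norm_evalCLM_smulRight_le (j : ℕ) (x : F) :
    ‖(lp.evalCLM 𝕜 (fun _ : ℕ => 𝕜) p j).smulRight x‖ ≤ ‖x‖ := by
  rw [ContinuousLinearMap.norm_smulRight_apply]
  exact mul_le_of_le_one_left (norm_nonneg x) (LinearMap.mkContinuous_norm_le _ zero_le_one _)

theorem hasSum_synthesisOperator [CompleteSpace F] {v : ℕ → F} (hv : Summable fun j => ‖v j‖) :
    HasSum (fun j => (lp.evalCLM 𝕜 (fun _ : ℕ => 𝕜) p j).smulRight (v j))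
      (synthesisOperator 𝕜 p v) :=
  (hv.of_norm_bounded fun j => norm_evalCLM_smulRight_le j (v j)).hasSum

theorem hasSum_synthesisOperator_apply [CompleteSpace F] {v : ℕ → F}
    (hv : Summable fun j => ‖v j‖) (k : lp (fun _ : ℕ => 𝕜) p) :
    HasSum (fun j => k j • v j) (synthesisOperator 𝕜 p v k) :=
  (hasSum_synthesisOperator hv).mapL (ContinuousLinearMap.apply 𝕜 F k)

theorem isCompactOperator_synthesisOperator [CompleteSpace F] {v : ℕ → F}
    (hv : Summable fun j => ‖v j‖) :
    IsCompactOperator (synthesisOperator 𝕜 p v) := by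
  have hrankOne (j : ℕ) :
      IsCompactOperator ((lp.evalCLM 𝕜 (fun _ : ℕ => 𝕜) p j).smulRight (v j)) :=
    (isCompactOperator_of_locallyCompactSpace_dom _).continuous_comp
      (continuous_id.smul continuous_const)
  refine isCompactOperator_of_tendsto (hasSum_synthesisOperator hv)
    (Eventually.of_forall fun s => ?_)
  induction s using Finset.cons_induction with
  | empty => simpa using isCompactOperator_zero
  | cons j s hj ih =>
    rw [Finset.sum_cons]
    exact (hrankOne j).add ih

end SynthesisOperator

section TruncatedConst

variable {𝕜 : Type*} [RCLike 𝕜] (p : ℝ≥0∞)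

noncomputable def truncatedConst (c : 𝕜) (j : ℕ) : lp (fun _ : ℕ => 𝕜) p :=
  ∑ i ∈ range (j + 1), lp.single p i c

theorem truncatedConst_apply (c : 𝕜) (j l : ℕ) :
    truncatedConst p c j l = if l ≤ j then c else 0 := by
  rw [truncatedConst, lp.coeFn_sum, Finset.sum_apply]
  simp [lp.single_apply, Pi.single_apply]

theorem norm_truncatedConst_le [Fact (1 ≤ p)] (c : 𝕜) (j : ℕ) :
    ‖truncatedConst p c j‖ ≤ (j + 1) * ‖c‖ := by
  have hp : 0 < p := zero_lt_one.trans_le (Fact.out : 1 ≤ p)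
  rw [truncatedConst]
  refine (norm_sum_le _ _).trans_eq ?_
  simp [lp.norm_single hp]

theorem summable_norm_truncatedConst_pow [Fact (1 ≤ p)] {c : 𝕜} (hc : ‖c‖ < 1) :
    Summable fun j => ‖truncatedConst p (c ^ j) j‖ := by
  have hgeom : Summable fun j : ℕ => ((j : ℝ) + 1) * ‖c‖ ^ j := by
    refine ((summable_pow_mul_geometric_of_norm_lt_one 1 ?_).add
      (summable_geometric_of_lt_one (norm_nonneg c) hc)).congr fun j => by ring
    rwa [norm_norm]
  refine hgeom.of_nonneg_of_le (fun _ => norm_nonneg _) fun j => ?_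
  simpa only [norm_pow] using norm_truncatedConst_le p (c ^ j) j

theorem hasSum_synthesisOperator_truncatedConst_pow_apply [Fact (1 ≤ p)] {c : 𝕜}
    (hc : ‖c‖ < 1) (k : lp (fun _ : ℕ => 𝕜) p) (l : ℕ) :
    HasSum (fun j => (if l ≤ j then c ^ j else 0) * k j)
      (synthesisOperator 𝕜 p (fun j => truncatedConst p (c ^ j) j) k l) := by
  have h := (hasSum_synthesisOperator_apply (summable_norm_truncatedConst_pow p hc) k).mapL
    (lp.evalCLM 𝕜 (fun _ : ℕ => 𝕜) p l)
  have hterm (j : ℕ) : lp.evalCLM 𝕜 (fun _ : ℕ => 𝕜) p l (k j • truncatedConst p (c ^ j) j) =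
      (if l ≤ j then c ^ j else 0) * k j := by
    change (k j • truncatedConst p (c ^ j) j) l = _
    rw [lp.coeFn_smul, Pi.smul_apply, truncatedConst_apply, smul_eq_mul, mul_comm]
  simp only [hterm] at h
  exact h

end TruncatedConst

theorem tsum_ite_le_pow {r : ℝ} (hr0 : 0 ≤ r) (hr1 : r < 1) (l : ℕ) :
    ∑' j, (if l ≤ j then r ^ j else 0) = r ^ l * (1 - r)⁻¹ := by
  refine ((hasSum_nat_add_iff' l).1 ?_).tsum_eq
  rw [Finset.sum_eq_zero fun j hj => if_neg (by simpa using hj), sub_zero]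
  simpa [pow_add, mul_comm] using (hasSum_geometric_of_lt_one hr0 hr1).mul_left (r ^ l)

theorem tsum_tsum_ite_le_pow {r : ℝ} (hr0 : 0 ≤ r) (hr1 : r < 1) :
    ∑' l, ∑' j, (if l ≤ j then r ^ j else 0) = (1 - r)⁻¹ ^ 2 := by
  simp only [tsum_ite_le_pow hr0 hr1, tsum_mul_right, tsum_geometric_of_lt_one hr0 hr1, sq]

theorem Complex.ofReal_rpow_neg_mul_cpow {x : ℝ} (hx : 0 < x) (t : ℝ) :
    ((x ^ (-t) : ℝ) : ℂ) * (x : ℂ) ^ (t : ℂ) = 1 := by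
  rw [← Complex.ofReal_cpow hx.le, ← Complex.ofReal_mul, ← Real.rpow_add hx, neg_add_cancel,
    Real.rpow_zero, Complex.ofReal_one]

section Kernel

variable {p e : ℕ} {K : ℕ → ℕ → ℝ}

theorem kernel_eq_pow
    (hK : ∀ l j : ℕ, K l j = if l ≤ j then (p : ℝ) ^ (-(j : ℝ) / (e : ℝ)) else 0) (l j : ℕ) :
    K l j = if l ≤ j then ((p : ℝ) ^ (-1 / (e : ℝ))) ^ j else 0 := by
  rw [hK, ← Real.rpow_mul_natCast (Nat.cast_nonneg p)]
  ring_nf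

theorem kernel_mul_sub_eq
    (hK : ∀ l j : ℕ, K l j = if l ≤ j then (p : ℝ) ^ (-(j : ℝ) / (e : ℝ)) else 0)
    (hp : 0 < p) {D0 : (ℕ → ℂ) → (ℕ → ℂ)}
    (hD0 : ∀ (φ : ℕ → ℂ) (l : ℕ),
      D0 φ l = ((p : ℂ) ^ (((l : ℂ)) / (e : ℂ))) * (φ l - φ (l + 1)))
    (φ : ℕ → ℂ) (l j : ℕ) :
    (K l j : ℂ) * D0 φ j = if l ≤ j then φ j - φ (j + 1) else 0 := by
  rw [hK, hD0]
  split_ifs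
  · have h := Complex.ofReal_rpow_neg_mul_cpow (x := p) (by exact_mod_cast hp) (j / e)
    push_cast at h ⊢
    rw [← mul_assoc, neg_div, h, one_mul]
  · simp

theorem sqrt_tsum_tsum_kernel_sq
    (hK : ∀ l j : ℕ, K l j = if l ≤ j then (p : ℝ) ^ (-(j : ℝ) / (e : ℝ)) else 0)
    (hp : 1 < p) (he : 0 < e) :
    Real.sqrt (∑' (l : ℕ) (j : ℕ), (K l j) ^ 2) = 1 / (1 - (p : ℝ) ^ (-(2 : ℝ) / (e : ℝ))) := by
  set r : ℝ := (p : ℝ) ^ (-(2 : ℝ) / (e : ℝ))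
  have hr1 : r < 1 := Real.rpow_lt_one_of_one_lt_of_neg (by exact_mod_cast hp)
    (div_neg_of_neg_of_pos (by norm_num) (by exact_mod_cast he))
  have hρsq : ((p : ℝ) ^ (-1 / (e : ℝ))) ^ 2 = r := by
    rw [← Real.rpow_mul_natCast (Nat.cast_nonneg p)]
    congr 1
    ring
  have hKsq (l j : ℕ) : K l j ^ 2 = if l ≤ j then r ^ j else 0 := by
    rw [kernel_eq_pow hK]
    split_ifs
    · rw [← pow_mul, mul_comm, pow_mul, hρsq]
    · ring
  simp only [hKsq]
  rw [tsum_tsum_ite_le_pow (by positivity) hr1,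
    Real.sqrt_sq (inv_nonneg.2 (sub_nonneg.2 hr1.le)), one_div]

end Kernel

/-- The forward difference operator `(D₀ φ)(l) = p^(l/e) (φ l - φ (l+1))` on `ℓ²(ℕ)` is
injective, its inverse is given by the kernel `K l j = p^(-j/e)` for `j ≥ l` (and `0`
otherwise), and this inverse extends to a compact Hilbert–Schmidt operator on `ℓ²(ℕ)`
with Hilbert–Schmidt norm `1/(1 - p^(-2/e))`. -/
theorem stmt_6 (p e : ℕ) (hp : 2 ≤ p) (he : 1 ≤ e)
    (D0 : (ℕ → ℂ) → (ℕ → ℂ))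
    (hD0 : ∀ (φ : ℕ → ℂ) (l : ℕ),
      D0 φ l = ((p : ℂ) ^ (((l : ℂ)) / (e : ℂ))) * (φ l - φ (l + 1)))
    (K : ℕ → ℕ → ℝ)
    (hK : ∀ l j : ℕ, K l j = if l ≤ j then (p : ℝ) ^ (-(j : ℝ) / (e : ℝ)) else 0) :
    (∀ φ : ℕ → ℂ, Memℓp φ 2 → D0 φ = 0 → φ = 0) ∧
    (∀ φ k : ℕ → ℂ, Memℓp φ 2 → Memℓp k 2 → D0 φ = k →
      ∀ l : ℕ, φ l = ∑' j : ℕ, (K l j : ℂ) * k j) ∧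
    (∃ T : lp (fun _ : ℕ => ℂ) 2 →L[ℂ] lp (fun _ : ℕ => ℂ) 2,
      (∀ (k : lp (fun _ : ℕ => ℂ) 2) (l : ℕ),
        (T k : ℕ → ℂ) l = ∑' j : ℕ, (K l j : ℂ) * (k : ℕ → ℂ) j) ∧
      IsCompactOperator T ∧
      Real.sqrt (∑' (l : ℕ) (j : ℕ), (K l j) ^ 2) =
        1 / (1 - (p : ℝ) ^ (-(2 : ℝ) / (e : ℝ)))) := by
  set ρ : ℝ := (p : ℝ) ^ (-1 / (e : ℝ))
  have hρ : ‖(ρ : ℂ)‖ < 1 := by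
    rw [Complex.norm_real, Real.norm_of_nonneg (by positivity)]
    exact Real.rpow_lt_one_of_one_lt_of_neg (by exact_mod_cast hp)
      (div_neg_of_neg_of_pos (by norm_num) (by exact_mod_cast he))
  have hKc (l j : ℕ) : (K l j : ℂ) = if l ≤ j then (ρ : ℂ) ^ j else 0 := by
    rw [kernel_eq_pow hK]
    split_ifs <;> simp [ρ]
  set T := synthesisOperator ℂ 2 fun j => truncatedConst 2 ((ρ : ℂ) ^ j) j
  have hT (k : lp (fun _ : ℕ => ℂ) 2) (l : ℕ) :
      HasSum (fun j => (K l j : ℂ) * k j) (T k l) := by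
    simpa only [hKc] using hasSum_synthesisOperator_truncatedConst_pow_apply 2 hρ k l
  have hinverse (φ : ℕ → ℂ) (hφ : Memℓp φ 2) (hDφ : Memℓp (D0 φ) 2) (l : ℕ) :
      φ l = ∑' j, (K l j : ℂ) * D0 φ j := by
    -- Telescoping alone would not give unconditional summability; `hT` does.
    have hsum : HasSum (fun j => (K l j : ℂ) * D0 φ j) _ := hT ⟨D0 φ, hDφ⟩ l
    rw [hsum.tsum_eq]
    simp only [kernel_mul_sub_eq hK (by omega) hD0] at hsum
    refine (hsum.eq_of_telescoping ?_).symm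
    simpa only [Nat.cofinite_eq_atTop] using hφ.tendsto_cofinite_zero (by norm_num)
  refine ⟨fun φ hφ hD => funext fun l => ?_, fun φ k hφ hk hD => hD ▸ hinverse φ hφ (hD ▸ hk),
    T, fun k l => (hT k l).tsum_eq.symm, isCompactOperator_synthesisOperator
      (summable_norm_truncatedConst_pow 2 hρ), sqrt_tsum_tsum_kernel_sq hK (by omega) he⟩
  simpa [hD] using hinverse φ hφ (hD ▸ zero_memℓp) l
end

section
/- Let q = p^{-2/e} with integers p ≥ 2, e ≥ 1, and consider the recursion for coefficients: c(2) arbitrary, and for k ≥ 2, c(2k) = (-λ/(1-q))^{k-1} · c(2) · p^{k(k-1)/e} (p^{2/e}-1)^{k-2} / [(p^{4/e}-1)² (p^{6/e}-1)² ⋯ (p^{(2k-2)/e}-1)² (p^{2k/e}-1)]. Then the series φ(l) = ∑_{k=1}^∞ c(2k) p^{-2lk/e} converges absolutely for every l ≥ 0 and φ ∈ ℓ¹(ℤ_{≥0}). -/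
open Finset Filter

set_option maxHeartbeats 2000000 in
/-- The power-series coefficients of the eigenvector of `(D₀ᴿ)* D₀ᴿ` decay so fast that
`φ(l) = ∑_{k≥1} c(2k) p^(-2lk/e)` converges absolutely for every `l`, and `φ ∈ ℓ¹`. -/
theorem stmt_11 (p e : ℕ) (hp : 2 ≤ p) (he : 1 ≤ e)
    (q : ℝ) (hq : q = (p : ℝ) ^ (-(2 : ℝ) / (e : ℝ)))
    (lam c2 : ℂ) (c : ℕ → ℂ) (hc1 : c 1 = c2)
    (hck : ∀ k : ℕ, 2 ≤ k →
      c k = (-lam / (1 - (q : ℂ))) ^ (k - 1) * c2 *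
        ((((p : ℝ) ^ (((k * (k - 1) : ℕ) : ℝ) / (e : ℝ))) : ℝ) : ℂ) *
        ((((p : ℝ) ^ ((2 : ℝ) / (e : ℝ)) - 1 : ℝ) : ℂ)) ^ (k - 2) /
        (((∏ j ∈ Finset.Icc 2 (k - 1),
            (((p : ℝ) ^ ((2 * (j : ℝ)) / (e : ℝ)) - 1 : ℝ) : ℂ) ^ 2)) *
          (((p : ℝ) ^ ((2 * (k : ℝ)) / (e : ℝ)) - 1 : ℝ) : ℂ))) :
    (∀ l : ℕ, Summable (fun k : ℕ =>
      ‖c (k + 1)‖ * (p : ℝ) ^ (-(2 * (l : ℝ) * ((k : ℝ) + 1)) / (e : ℝ)))) ∧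
    Summable (fun l : ℕ =>
      ‖∑' k : ℕ, c (k + 1) *
        (((p : ℝ) ^ (-(2 * (l : ℝ) * ((k : ℝ) + 1)) / (e : ℝ)) : ℝ) : ℂ)‖) := by
  have he0 : (0:ℝ) < (e:ℝ) := by exact_mod_cast he
  have hp1 : (1:ℝ) < (p:ℝ) := by exact_mod_cast (by omega : 1 < p)
  have hp0 : (0:ℝ) < (p:ℝ) := by linarith
  set t : ℝ := (p:ℝ) ^ ((2:ℝ)/(e:ℝ)) with ht
  have ht1 : 1 < t := (Real.one_lt_rpow_iff_of_pos hp0).mpr (Or.inl ⟨hp1, by positivity⟩)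
  have ht0 : 0 < t := by linarith
  -- rewriting rpow's as powers of t
  have htj : ∀ j : ℕ, (p:ℝ) ^ ((2*(j:ℝ))/(e:ℝ)) = t ^ j := by
    intro j
    rw [ht, ← Real.rpow_natCast ((p:ℝ) ^ ((2:ℝ)/(e:ℝ))) j, ← Real.rpow_mul hp0.le]
    congr 1; ring
  have htm : ∀ k : ℕ, (p:ℝ) ^ (((k*(k-1):ℕ):ℝ)/(e:ℝ)) = t ^ (k*(k-1)/2) := by
    intro k
    have hev : Even (k*(k-1)) := by
      rcases Nat.even_or_odd k with h | h
      · exact h.mul_right _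
      · exact (Nat.Odd.sub_odd h odd_one).mul_left _
    obtain ⟨m, hm⟩ := hev
    have h2 : k*(k-1) = 2*m := by omega
    rw [h2, Nat.mul_div_cancel_left m (by norm_num), ht,
      ← Real.rpow_natCast ((p:ℝ) ^ ((2:ℝ)/(e:ℝ))) m, ← Real.rpow_mul hp0.le]
    congr 1
    push_cast
    ring
  set δ : ℝ := 1 - (t^2)⁻¹ with hδdef
  have ht2 : 1 < t^2 := by nlinarith
  have hδ0 : 0 < δ := by
    have h1 : (t^2)⁻¹ < 1 := inv_lt_one_of_one_lt₀ ht2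
    simp only [hδdef]; linarith
  have hδ1 : δ < 1 := by
    have : 0 < (t^2)⁻¹ := by positivity
    simp only [hδdef]; linarith
  set A : ℝ := ‖-lam / (1 - (q:ℂ))‖ with hA
  have hA0 : 0 ≤ A := norm_nonneg _
  set B : ℝ := (A+1)*(t+1)/δ^2 with hB
  have hB1 : 1 ≤ B := by
    rw [hB, le_div_iff₀ (by positivity)]
    nlinarith
  have hB0 : 0 < B := by linarith
  set C : ℝ := ‖c2‖ * t^3 with hC
  have hC0 : 0 ≤ C := by positivity
  -- the key decay bound
  have key : ∀ k : ℕ, 1 ≤ k → ‖c k‖ ≤ C * B^k / t^(k*(k+1)/2) := by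
    intro k hk
    rcases eq_or_lt_of_le hk with h1 | h2
    · rw [← h1, hc1]
      have he1 : (1*(1+1)/2 : ℕ) = 1 := by norm_num
      rw [he1, pow_one, pow_one, hC, le_div_iff₀ ht0]
      have h3a : t ≤ t^3 := by nlinarith [mul_pos (mul_pos ht0 (sub_pos.mpr ht1)) (show (0:ℝ) < t + 1 by linarith)]
      have h3 : t ≤ t^3 * B := h3a.trans (le_mul_of_one_le_right (by positivity) hB1)
      calc ‖c2‖ * t ≤ ‖c2‖ * (t^3*B) := by
            exact mul_le_mul_of_nonneg_left h3 (norm_nonneg _)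
        _ = ‖c2‖ * t^3 * B := by ring
    · have hk2 : 2 ≤ k := h2
      set m : ℕ := k*(k-1)/2 with hmdef
      have hm2 : k*(k-1) = 2*m := by
        have hev : Even (k*(k-1)) := by
          rcases Nat.even_or_odd k with h | h
          · exact h.mul_right _
          · exact (Nat.Odd.sub_odd h odd_one).mul_left _
        obtain ⟨a, ha⟩ := hev
        omega
      have hm1 : 1 ≤ m := by
        have hge : 2*1 ≤ k*(k-1) := Nat.mul_le_mul hk2 (by omega)
        omega
      -- rewrite c k and compute its norm
      have hden : ((∏ j ∈ Finset.Icc 2 (k - 1),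
            (((p : ℝ) ^ ((2 * (j : ℝ)) / (e : ℝ)) - 1 : ℝ) : ℂ) ^ 2)) *
          (((p : ℝ) ^ ((2 * (k : ℝ)) / (e : ℝ)) - 1 : ℝ) : ℂ)
          = (((∏ j ∈ Finset.Icc 2 (k - 1), (t^j - 1)^2) * (t^k - 1) : ℝ) : ℂ) := by
        simp only [htj]
        push_cast
        ring
      set P : ℝ := ∏ j ∈ Finset.Icc 2 (k-1), (t^j - 1)^2 with hP
      have hfac : ∀ j : ℕ, 2 ≤ j → δ * t^j ≤ t^j - 1 := by
        intro j hj
        have h1 : t^2 ≤ t^j := pow_le_pow_right₀ ht1.le hj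
        have h2 : (1:ℝ) ≤ (t^2)⁻¹ * t^j := by
          rw [inv_mul_eq_div, le_div_iff₀ (by positivity)]
          simpa using h1
        simp only [hδdef]
        nlinarith
      have honep : ∀ j : ℕ, 1 ≤ j → 1 < t^j := by
        intro j hj
        have h := pow_le_pow_right₀ ht1.le hj
        rw [pow_one] at h
        linarith
      have hPpos : 0 < P := by
        refine Finset.prod_pos (fun j hj => ?_)
        have hj2 : 2 ≤ j := (Finset.mem_Icc.mp hj).1
        have := honep j (by omega)
        have : (0:ℝ) < t^j - 1 := by linarith
        positivity
      have hkpos : (0:ℝ) < t^k - 1 := by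
        have := honep k (by omega)
        linarith
      have hRpos : 0 < P * (t^k - 1) := mul_pos hPpos hkpos
      -- norm computation
      have hnorm : ‖c k‖ = A ^ (k-1) * ‖c2‖ * t^m * (t-1)^(k-2) / (P * (t^k - 1)) := by
        rw [hck k hk2, hden, norm_div, norm_mul, norm_mul, norm_mul, norm_pow, norm_pow,
          Complex.norm_real, Complex.norm_real, Complex.norm_real,
          Real.norm_eq_abs, Real.norm_eq_abs, Real.norm_eq_abs,
          abs_of_pos (by positivity : (0:ℝ) < (p:ℝ) ^ (((k * (k - 1) : ℕ) : ℝ) / (e : ℝ))),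
          abs_of_pos (by linarith : (0:ℝ) < t - 1), abs_of_pos hRpos, htm k, ← hA, ← hmdef]
      rw [hnorm]
      -- lower bound for the denominator
      have hsum : ∑ j ∈ Finset.Icc 2 (k-1), j = m - 1 := by
        have hIcc : Finset.Icc 2 (k-1) = Finset.Ico 2 k := by
          rw [← Finset.Ico_add_one_right_eq_Icc]
          congr 1
          omega
        have hcons : (∑ j ∈ Finset.Ico 0 2, j) + ∑ j ∈ Finset.Ico 2 k, j
            = ∑ j ∈ Finset.Ico 0 k, j :=
          Finset.sum_Ico_consecutive _ (by norm_num) (by omega)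
        have h0 : (∑ j ∈ Finset.Ico 0 2, j) = 1 := by
          rw [← Finset.range_eq_Ico]
          simp [Finset.sum_range_succ]
        have hr : ∑ j ∈ Finset.Ico 0 k, j = m := by
          rw [← Finset.range_eq_Ico, Finset.sum_range_id]
        rw [hIcc]
        omega
      have hcard : (Finset.Icc 2 (k-1)).card = k - 2 := by
        rw [Nat.card_Icc]; omega
      have hPlow : δ^(2*(k-2)) * (t^2)^(m-1) ≤ P := by
        calc δ^(2*(k-2)) * (t^2)^(m-1)
            = ∏ j ∈ Finset.Icc 2 (k-1), (δ^2 * (t^2)^j) := by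
              rw [Finset.prod_mul_distrib, Finset.prod_const, Finset.prod_pow_eq_pow_sum,
                hcard, hsum, pow_mul]
          _ ≤ P := by
              refine Finset.prod_le_prod (fun j hj => by positivity) (fun j hj => ?_)
              have hj2 : 2 ≤ j := (Finset.mem_Icc.mp hj).1
              have h1 : δ^2 * (t^2)^j = (δ * t^j)^2 := by
                rw [mul_pow, ← pow_mul, mul_comm 2 j, pow_mul]
              rw [h1]
              exact pow_le_pow_left₀ (by positivity) (hfac j hj2) 2
      have hklow : δ * t^k ≤ t^k - 1 := hfac k hk2
      -- crude further lower bound to cancel δ's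
      have hRlow : δ^(2*k) * ((t^2)^(m-1) * t^k) ≤ P * (t^k - 1) := by
        have hd : δ^(2*k) ≤ δ^(2*(k-2)) * δ := by
          rw [← pow_succ]
          exact pow_le_pow_of_le_one hδ0.le hδ1.le (by omega)
        calc δ^(2*k) * ((t^2)^(m-1) * t^k)
            ≤ (δ^(2*(k-2)) * δ) * ((t^2)^(m-1) * t^k) := by
              exact mul_le_mul_of_nonneg_right hd (by positivity)
          _ = (δ^(2*(k-2)) * (t^2)^(m-1)) * (δ * t^k) := by ring
          _ ≤ P * (t^k - 1) := by
              exact mul_le_mul hPlow hklow (by positivity) hPpos.le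
      -- now the chain of inequalities
      have hkk : k*(k+1)/2 = m + k := by
        have e1 : k+1 = (k-1)+2 := by omega
        have h3 : k*(k+1) = 2*m + 2*k := by
          rw [e1, Nat.mul_add, hm2]; ring
        rw [h3]; omega
      rw [hkk, div_le_div_iff₀ hRpos (by positivity)]
      calc A ^ (k-1) * ‖c2‖ * t^m * (t-1)^(k-2) * t^(m+k)
          = ‖c2‖ * (A^(k-1) * (t-1)^(k-2) * t^(m + (m+k))) := by
            rw [pow_add]; ring
        _ ≤ ‖c2‖ * ((A+1)^k * (t+1)^k * t^(3 + (2*(m-1) + k))) := by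
            refine mul_le_mul_of_nonneg_left ?_ (norm_nonneg _)
            have h1 : A^(k-1) ≤ (A+1)^k :=
              le_trans (pow_le_pow_left₀ hA0 (by linarith) _)
                (pow_le_pow_right₀ (by linarith) (by omega))
            have h2 : (t-1)^(k-2) ≤ (t+1)^k :=
              le_trans (pow_le_pow_left₀ (by linarith) (by linarith) _)
                (pow_le_pow_right₀ (by linarith) (by omega))
            have h3 : t^(m+(m+k)) ≤ t^(3 + (2*(m-1) + k)) :=
              pow_le_pow_right₀ ht1.le (by omega)
            have hh : A^(k-1) * (t-1)^(k-2) ≤ (A+1)^k * (t+1)^k :=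
              mul_le_mul h1 h2 (pow_nonneg (by linarith) _) (by positivity)
            exact mul_le_mul hh h3 (by positivity) (by positivity)
        _ = C * B^k * (δ^(2*k) * ((t^2)^(m-1) * t^k)) := by
            have hδne : (δ^(2*k)) ≠ 0 := by positivity
            have hBk : B^k * δ^(2*k) = (A+1)^k * (t+1)^k := by
              rw [hB, div_pow, mul_pow, ← pow_mul, div_mul_cancel₀ _ hδne]
            rw [hC, ← hBk, pow_add, pow_add, ← pow_mul]
            ring
        _ ≤ C * B^k * (P * (t^k - 1)) := by
            exact mul_le_mul_of_nonneg_left hRlow (by positivity)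
  clear_value t δ A B C
  -- summability of the majorant
  have hg : Summable (fun k : ℕ => C * B^(k+1) / t^((k+1)*(k+2)/2)) := by
    apply summable_of_ratio_norm_eventually_le (r := 1/2) (by norm_num)
    have htend : Tendsto (fun n : ℕ => t^n) atTop atTop :=
      tendsto_pow_atTop_atTop_of_one_lt ht1
    filter_upwards [htend.eventually_ge_atTop (2*B)] with n hn
    rw [Real.norm_eq_abs, Real.norm_eq_abs, abs_of_nonneg (by positivity),
      abs_of_nonneg (by positivity)]
    obtain ⟨a, ha⟩ : ∃ a, (n+1)*(n+2) = 2*a := by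
      have hev : Even ((n+1)*(n+2)) := Nat.even_mul_succ_self (n+1)
      obtain ⟨b, hb⟩ := hev; exact ⟨b, by omega⟩
    have e1 : (n+1)*(n+2)/2 = a := by omega
    have e2 : (n+1+1)*(n+1+2)/2 = a + (n+2) := by
      have h' : (n+1+1)*(n+1+2) = (n+1)*(n+2) + 2*(n+2) := by ring
      omega
    rw [e1, e2, show B^(n+1+1) = B^(n+1)*B from pow_succ B (n+1), show t^(a+(n+2)) = t^a * t^(n+2) from pow_add t a (n+2)]
    have hbb : B / t^(n+2) ≤ 1/2 := by
      rw [div_le_iff₀ (by positivity)]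
      have h1 : t^n ≤ t^(n+2) := pow_le_pow_right₀ ht1.le (by omega)
      linarith
    calc C * (B^(n+1) * B) / (t^a * t^(n+2))
        = (C * B^(n+1) / t^a) * (B / t^(n+2)) := by
          field_simp
      _ ≤ (C * B^(n+1) / t^a) * (1/2) := by
          exact mul_le_mul_of_nonneg_left hbb (by positivity)
      _ = 1/2 * (C * B^(n+1) / t^a) := by ring
  have hsum1 : Summable (fun k : ℕ => ‖c (k+1)‖) := by
    refine Summable.of_nonneg_of_le (fun k => norm_nonneg _) (fun k => ?_) hg
    exact key (k+1) (by omega)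
  -- the weights
  have hw1 : ∀ (l k : ℕ), 0 < (p : ℝ) ^ (-(2 * (l : ℝ) * ((k : ℝ) + 1)) / (e : ℝ)) :=
    fun l k => Real.rpow_pos_of_pos hp0 _
  have hwle1 : ∀ (l k : ℕ), (p : ℝ) ^ (-(2 * (l : ℝ) * ((k : ℝ) + 1)) / (e : ℝ)) ≤ 1 := by
    intro l k
    apply Real.rpow_le_one_of_one_le_of_nonpos hp1.le
    apply div_nonpos_of_nonpos_of_nonneg _ he0.le
    have : (0:ℝ) ≤ 2 * (l : ℝ) * ((k : ℝ) + 1) := by positivity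
    linarith
  have part1 : ∀ l : ℕ, Summable (fun k : ℕ =>
      ‖c (k + 1)‖ * (p : ℝ) ^ (-(2 * (l : ℝ) * ((k : ℝ) + 1)) / (e : ℝ))) := by
    intro l
    refine Summable.of_nonneg_of_le (fun k => by positivity) (fun k => ?_) hsum1
    calc ‖c (k+1)‖ * (p : ℝ) ^ (-(2 * (l : ℝ) * ((k : ℝ) + 1)) / (e : ℝ))
        ≤ ‖c (k+1)‖ * 1 := mul_le_mul_of_nonneg_left (hwle1 l k) (norm_nonneg _)
      _ = ‖c (k+1)‖ := mul_one _
  refine ⟨part1, ?_⟩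
  -- part 2
  have hq0 : 0 < q := hq ▸ Real.rpow_pos_of_pos hp0 _
  have hq1 : q < 1 := by
    rw [hq]
    exact Real.rpow_lt_one_of_one_lt_of_neg hp1 (div_neg_of_neg_of_pos (by norm_num) he0)
  have hwq : ∀ (l k : ℕ), (p : ℝ) ^ (-(2 * (l : ℝ) * ((k : ℝ) + 1)) / (e : ℝ)) ≤ q^l := by
    intro l k
    have hql : q^l = (p:ℝ) ^ ((-(2 * (l:ℝ))) / (e:ℝ)) := by
      rw [hq, ← Real.rpow_natCast ((p:ℝ) ^ (-(2:ℝ)/(e:ℝ))) l, ← Real.rpow_mul hp0.le]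
      congr 1; ring
    rw [hql]
    apply Real.rpow_le_rpow_of_exponent_le hp1.le
    rw [div_le_div_iff_of_pos_right he0]
    nlinarith [Nat.cast_nonneg (α := ℝ) l, Nat.cast_nonneg (α := ℝ) k]
  set S : ℝ := ∑' k : ℕ, ‖c (k+1)‖ with hS
  have hS0 : 0 ≤ S := tsum_nonneg (fun k => norm_nonneg _)
  refine Summable.of_nonneg_of_le (fun l => norm_nonneg _) (fun l => ?_)
    ((summable_geometric_of_lt_one hq0.le hq1).mul_left S)
  have hnorms : (fun k : ℕ => ‖c (k + 1) *
      (((p : ℝ) ^ (-(2 * (l : ℝ) * ((k : ℝ) + 1)) / (e : ℝ)) : ℝ) : ℂ)‖)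
      = fun k : ℕ => ‖c (k + 1)‖ * (p : ℝ) ^ (-(2 * (l : ℝ) * ((k : ℝ) + 1)) / (e : ℝ)) := by
    funext k
    rw [norm_mul, Complex.norm_real, Real.norm_eq_abs, abs_of_pos (hw1 l k)]
  calc ‖∑' k : ℕ, c (k + 1) *
        (((p : ℝ) ^ (-(2 * (l : ℝ) * ((k : ℝ) + 1)) / (e : ℝ)) : ℝ) : ℂ)‖
      ≤ ∑' k : ℕ, ‖c (k + 1) *
        (((p : ℝ) ^ (-(2 * (l : ℝ) * ((k : ℝ) + 1)) / (e : ℝ)) : ℝ) : ℂ)‖ := by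
        apply norm_tsum_le_tsum_norm
        rw [hnorms]; exact part1 l
    _ = ∑' k : ℕ, ‖c (k + 1)‖ * (p : ℝ) ^ (-(2 * (l : ℝ) * ((k : ℝ) + 1)) / (e : ℝ)) := by
        rw [hnorms]
    _ ≤ ∑' k : ℕ, ‖c (k + 1)‖ * q^l := by
        refine Summable.tsum_le_tsum (fun k => ?_) (part1 l) (hsum1.mul_right _)
        exact mul_le_mul_of_nonneg_left (hwq l k) (norm_nonneg _)
    _ = S * q^l := by rw [tsum_mul_right]
end

section
/- Let p ≥ 2, e, f ≥ 1 be integers, and suppose (λ_n)_{n≥0} is a positive sequence with λ_0 > 0 and p^{n/e}(1 - 1/(p^{2/e}-1)) ≤ λ_n ≤ p^{n/e} for n ≥ 1, where p^{2/e} > 2. Then for every real s ≥ ef, the double series ∑_{n=0}^∞ (1 + ∑_{m=1}^∞ p^{-2ms/e}(p^{mf} - p^{(m-1)f})) λ_n^{-s} converges. -/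
/-- `(Dᴿ)⁻¹` is `s`-Schatten for `s ≥ ef`: the double series
`∑_n (1 + ∑_{m≥1} p^(-2ms/e)(p^(mf) - p^((m-1)f))) λ_n^(-s)` converges. -/
theorem stmt_15 (p e f : ℕ) (hp : 2 ≤ p) (he : 1 ≤ e) (hf : 1 ≤ f)
    (hpe : 2 < (p : ℝ) ^ ((2 : ℝ) / (e : ℝ)))
    (lam : ℕ → ℝ) (h0 : 0 < lam 0)
    (hbound : ∀ n : ℕ, 1 ≤ n →
      (p : ℝ) ^ ((n : ℝ) / (e : ℝ)) * (1 - 1 / ((p : ℝ) ^ ((2 : ℝ) / (e : ℝ)) - 1)) ≤ lam n ∧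
        lam n ≤ (p : ℝ) ^ ((n : ℝ) / (e : ℝ)))
    (s : ℝ) (hs : (e : ℝ) * f ≤ s) :
    Summable (fun n : ℕ =>
      (1 + ∑' m : ℕ,
          (p : ℝ) ^ (-(2 * ((m : ℝ) + 1) * s) / (e : ℝ)) *
            ((p : ℝ) ^ (((m : ℝ) + 1) * (f : ℝ)) - (p : ℝ) ^ ((m : ℝ) * (f : ℝ)))) *
        lam n ^ (-s)) := by
  have hp1 : (1 : ℝ) < (p : ℝ) := by exact_mod_cast hp.trans_lt' one_lt_two
  have hp0 : (0 : ℝ) < p := by linarith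
  have he0 : (0 : ℝ) < e := by exact_mod_cast he
  have hs0 : 0 < s := by
    have : (1 : ℝ) ≤ (e : ℝ) * f := by
      have h1 : (1 : ℝ) ≤ (e : ℝ) := by exact_mod_cast he
      have h2 : (1 : ℝ) ≤ (f : ℝ) := by exact_mod_cast hf
      nlinarith
    linarith
  -- constant c
  set c : ℝ := 1 - 1 / ((p : ℝ) ^ ((2 : ℝ) / (e : ℝ)) - 1) with hc
  have hc0 : 0 < c := by
    have h1 : (1 : ℝ) < (p : ℝ) ^ ((2 : ℝ) / (e : ℝ)) - 1 := by linarith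
    have : 1 / ((p : ℝ) ^ ((2 : ℝ) / (e : ℝ)) - 1) < 1 := by
      rw [div_lt_one (by linarith)]; linarith
    simp only [hc]; linarith
  -- ratio
  set r : ℝ := (p : ℝ) ^ (-(s / (e : ℝ))) with hr
  have hr0 : 0 < r := Real.rpow_pos_of_pos hp0 _
  have hr1 : r < 1 := by
    apply Real.rpow_lt_one_of_one_lt_of_neg hp1
    have : 0 < s / (e : ℝ) := div_pos hs0 he0
    linarith
  have key : Summable (fun n : ℕ => lam n ^ (-s)) := by
    rw [← summable_nat_add_iff 1]
    apply Summable.of_nonneg_of_le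
      (fun n => Real.rpow_nonneg (le_of_lt (by
        have := (hbound (n + 1) (by omega)).1
        have hpow : (0 : ℝ) < (p : ℝ) ^ (((n : ℕ) + 1 : ℝ) / (e : ℝ)) :=
          Real.rpow_pos_of_pos hp0 _
        have : 0 < (p : ℝ) ^ (((n + 1 : ℕ) : ℝ) / (e : ℝ)) * c :=
          mul_pos (Real.rpow_pos_of_pos hp0 _) hc0
        linarith [(hbound (n + 1) (by omega)).1])) _)
      (fun n => ?_) (Summable.mul_left (c ^ (-s) * r) (summable_geometric_of_lt_one hr0.le hr1))
    · -- lam (n+1) ^ (-s) ≤ c^(-s) * r * r^n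
      have hb := (hbound (n + 1) (by omega)).1
      have hppos : (0 : ℝ) < (p : ℝ) ^ (((n + 1 : ℕ) : ℝ) / (e : ℝ)) :=
        Real.rpow_pos_of_pos hp0 _
      have hpos : 0 < (p : ℝ) ^ (((n + 1 : ℕ) : ℝ) / (e : ℝ)) * c := mul_pos hppos hc0
      have step1 : lam (n + 1) ^ (-s) ≤
          ((p : ℝ) ^ (((n + 1 : ℕ) : ℝ) / (e : ℝ)) * c) ^ (-s) :=
        Real.rpow_le_rpow_of_nonpos hpos hb (by linarith)
      have step2 : ((p : ℝ) ^ (((n + 1 : ℕ) : ℝ) / (e : ℝ)) * c) ^ (-s) =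
          c ^ (-s) * r ^ (n + 1) := by
        rw [Real.mul_rpow hppos.le hc0.le, mul_comm]
        congr 1
        rw [← Real.rpow_natCast r (n + 1), hr, ← Real.rpow_mul hp0.le,
          ← Real.rpow_mul hp0.le]
        congr 1
        push_cast
        ring
      calc lam (n + 1) ^ (-s) ≤ c ^ (-s) * r ^ (n + 1) := by rw [← step2]; exact step1
        _ = c ^ (-s) * r * r ^ n := by ring
  exact key.mul_left _
end
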